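/- arXiv:1308.4528 — 5 statements merged into one kernel-verified Lean document; each statement's English description precedes it below -/
import Mathlib

section
/- Let $p$ be a prime and let $G \subseteq \mathrm{GL}_2(\mathbb{F}_p)$ be a subgroup whose image in $\mathrm{PGL}_2(\mathbb{F}_p)$ is isomorphic to $A_4$, $S_4$, or $A_5$, and such that $p \nmid \#G$. Then $G$ meets the center of $\mathrm{GL}_2(\mathbb{F}_p)$ non-trivially. -/
/-!
Suppose `G` meets the centre `Z` of `GL₂(𝔽_p)` trivially. Then `G` maps isomorphically onto its
image in `PGL₂(𝔽_p)`, and each of `A₄`, `S₄`, `A₅` contains a Klein four-group, so `G` contains two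
commuting involutions `a`, `b` with `a`, `b`, `ab` non-central; in particular `p ≠ 2`.
A non-scalar `a` with `a²` scalar has trace zero by Cayley–Hamilton, and for traceless `2 × 2`
matrices `ab + ba = tr(ab)`, so `2ab` is scalar, i.e. `ab ∈ Z`: a contradiction.
-/

open Matrix

section KleinFourPair

variable {H K : Type*} [Group H] [Group K]

def IsKleinFourPair (x y : H) : Prop :=
  x * x = 1 ∧ y * y = 1 ∧ x * y = y * x ∧ x ≠ 1 ∧ y ≠ 1 ∧ x * y ≠ 1

theorem isKleinFourPair_map_iff {f : H →* K} (hf : Function.Injective f) {x y : H} :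
    IsKleinFourPair (f x) (f y) ↔ IsKleinFourPair x y := by
  simp only [IsKleinFourPair, ← map_mul, ne_eq, map_eq_one_iff f hf, hf.eq_iff]

theorem exists_isKleinFourPair_of_mulEquiv (e : H ≃* K) (h : ∃ x y : K, IsKleinFourPair x y) :
    ∃ x y : H, IsKleinFourPair x y := by
  obtain ⟨x, y, hxy⟩ := h
  exact ⟨e.symm x, e.symm y, (isKleinFourPair_map_iff (f := e.toMonoidHom) e.injective).mp
    (by simpa using hxy)⟩

theorem IsKleinFourPair.two_dvd_natCard {x y : H} (h : IsKleinFourPair x y) :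
    2 ∣ Nat.card H :=
  orderOf_eq_prime (by rw [sq]; exact h.1) h.2.2.2.1 ▸ orderOf_dvd_natCard x

end KleinFourPair

section Permutations

open Equiv

theorem exists_isKleinFourPair_alternatingGroup_fin_four :
    ∃ x y : alternatingGroup (Fin 4), IsKleinFourPair x y :=
  ⟨⟨swap 0 1 * swap 2 3, Perm.mem_alternatingGroup.mpr (by decide)⟩,
    ⟨swap 0 2 * swap 1 3, Perm.mem_alternatingGroup.mpr (by decide)⟩,
    by unfold IsKleinFourPair; decide⟩

theorem exists_isKleinFourPair_perm_fin_four : ∃ x y : Perm (Fin 4), IsKleinFourPair x y :=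
  ⟨swap 0 1 * swap 2 3, swap 0 2 * swap 1 3, by unfold IsKleinFourPair; decide⟩

theorem exists_isKleinFourPair_alternatingGroup_fin_five :
    ∃ x y : alternatingGroup (Fin 5), IsKleinFourPair x y :=
  ⟨⟨swap 0 1 * swap 2 3, Perm.mem_alternatingGroup.mpr (by decide)⟩,
    ⟨swap 0 2 * swap 1 3, Perm.mem_alternatingGroup.mpr (by decide)⟩,
    by unfold IsKleinFourPair; decide⟩

end Permutations

theorem QuotientGroup.subgroupMap_mk'_injective {H : Type*} [Group H] {N : Subgroup H} [N.Normal]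
    {G : Subgroup H} (hGN : Disjoint G N) : Function.Injective ((mk' N).subgroupMap G) := by
  rw [injective_iff_map_eq_one]
  rintro ⟨g, hg⟩ hg1
  have hgN : g ∈ N := by simpa [Subtype.ext_iff] using hg1
  exact Subtype.ext (Subgroup.disjoint_def.mp hGN hg hgN)

namespace Matrix

section CommRing

variable {R : Type*} [CommRing R]

theorem mul_self_fin_two (a : Matrix (Fin 2) (Fin 2) R) :
    a * a = a.trace • a - a.det • 1 := by
  ext i j
  fin_cases i <;> fin_cases j <;> simp [mul_apply, trace_fin_two, det_fin_two] <;> ring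

theorem mul_add_mul_fin_two_of_trace_eq_zero {a b : Matrix (Fin 2) (Fin 2) R}
    (ha : a.trace = 0) (hb : b.trace = 0) : a * b + b * a = (a * b).trace • 1 := by
  rw [trace_fin_two, add_eq_zero_iff_eq_neg'] at ha hb
  ext i j
  fin_cases i <;> fin_cases j <;> simp [mul_apply, trace_fin_two, ha, hb] <;> ring

theorem smul_one_mem_range_scalar {n : Type*} [Fintype n] [DecidableEq n] (c : R) :
    c • (1 : Matrix n n R) ∈ Set.range (scalar n) :=
  ⟨c, by rw [scalar_apply, smul_one_eq_diagonal]⟩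

end CommRing

variable {F : Type*} [Field F]

theorem trace_eq_zero_of_mul_self_mem_range_scalar {a : Matrix (Fin 2) (Fin 2) F}
    (ha : a * a ∈ Set.range (scalar (Fin 2))) (has : a ∉ Set.range (scalar (Fin 2))) :
    a.trace = 0 := by
  obtain ⟨c, hc⟩ := ha
  by_contra htr
  apply has
  have hsmul : a.trace • a = (c + a.det) • 1 := by
    rw [add_smul, smul_one_eq_diagonal c, ← scalar_apply, hc, mul_self_fin_two]
    abel
  have : a = (a.trace⁻¹ * (c + a.det)) • 1 := by
    rw [mul_smul, ← hsmul, smul_smul, inv_mul_cancel₀ htr, one_smul]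
  exact this ▸ smul_one_mem_range_scalar _

theorem mul_mem_range_scalar_of_trace_eq_zero (h2 : (2 : F) ≠ 0) {a b : Matrix (Fin 2) (Fin 2) F}
    (ha : a.trace = 0) (hb : b.trace = 0) (hab : a * b = b * a) :
    a * b ∈ Set.range (scalar (Fin 2)) := by
  have hsum := mul_add_mul_fin_two_of_trace_eq_zero ha hb
  rw [← hab, ← two_smul F] at hsum
  have : a * b = ((2 : F)⁻¹ * (a * b).trace) • 1 := by
    rw [mul_smul, ← hsum, smul_smul, inv_mul_cancel₀ h2, one_smul]
  exact this ▸ smul_one_mem_range_scalar _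

end Matrix

namespace Matrix.GeneralLinearGroup

theorem mul_mem_center_of_mul_self_eq_one {F : Type*} [Field F] (h2 : (2 : F) ≠ 0)
    {g h : GL (Fin 2) F} (hg : g * g = 1) (hh : h * h = 1) (hgh : g * h = h * g)
    (hgZ : g ∉ Subgroup.center (GL (Fin 2) F)) (hhZ : h ∉ Subgroup.center (GL (Fin 2) F)) :
    g * h ∈ Subgroup.center (GL (Fin 2) F) := by
  simp only [mem_center_iff_val_mem_range_scalar, Units.val_mul] at hgZ hhZ ⊢
  have trace_eq_zero {k : GL (Fin 2) F} (hk : k * k = 1)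
      (hkZ : k.val ∉ Set.range (Matrix.scalar (Fin 2))) : k.val.trace = 0 :=
    trace_eq_zero_of_mul_self_mem_range_scalar
      ⟨1, by rw [map_one, ← Units.val_mul, hk, Units.val_one]⟩ hkZ
  exact mul_mem_range_scalar_of_trace_eq_zero h2 (trace_eq_zero hg hgZ) (trace_eq_zero hh hhZ)
    (by simpa only [Units.val_mul] using congrArg Units.val hgh)

end Matrix.GeneralLinearGroup

/-- If `G ⊆ GL₂(𝔽_p)` has order prime to `p` and its image in `PGL₂(𝔽_p)` is isomorphic to
`A₄`, `S₄`, or `A₅`, then `G` meets the center of `GL₂(𝔽_p)` non-trivially. -/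
theorem stmt_3 (p : ℕ) [Fact p.Prime]
    (G : Subgroup (GL (Fin 2) (ZMod p)))
    (hord : ¬ p ∣ Nat.card G)
    (hima : Nonempty (↥(G.map (QuotientGroup.mk' (Subgroup.center (GL (Fin 2) (ZMod p))))) ≃*
        alternatingGroup (Fin 4)) ∨
      Nonempty (↥(G.map (QuotientGroup.mk' (Subgroup.center (GL (Fin 2) (ZMod p))))) ≃*
        Equiv.Perm (Fin 4)) ∨
      Nonempty (↥(G.map (QuotientGroup.mk' (Subgroup.center (GL (Fin 2) (ZMod p))))) ≃*
        alternatingGroup (Fin 5))) :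
    ∃ g ∈ G, g ≠ 1 ∧ g ∈ Subgroup.center (GL (Fin 2) (ZMod p)) := by
  by_contra! hG
  have hGZ : Disjoint G (Subgroup.center _) :=
    Subgroup.disjoint_def.mpr fun hg hgZ => not_not.mp fun h1 => hG _ hg h1 hgZ
  obtain ⟨u, v, huv⟩ : ∃ u v : G.map (QuotientGroup.mk' (Subgroup.center _)),
      IsKleinFourPair u v := by
    rcases hima with ⟨⟨e⟩⟩ | ⟨⟨e⟩⟩ | ⟨⟨e⟩⟩
    · exact exists_isKleinFourPair_of_mulEquiv e exists_isKleinFourPair_alternatingGroup_fin_four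
    · exact exists_isKleinFourPair_of_mulEquiv e exists_isKleinFourPair_perm_fin_four
    · exact exists_isKleinFourPair_of_mulEquiv e exists_isKleinFourPair_alternatingGroup_fin_five
  obtain ⟨a, rfl⟩ := MonoidHom.subgroupMap_surjective _ G u
  obtain ⟨b, rfl⟩ := MonoidHom.subgroupMap_surjective _ G v
  have hab := (isKleinFourPair_map_iff (QuotientGroup.subgroupMap_mk'_injective hGZ)).mp huv
  have h2 : (2 : ZMod p) ≠ 0 := fun h =>
    hord (((ZMod.natCast_eq_zero_iff 2 p).mp (by exact_mod_cast h)).trans hab.two_dvd_natCard)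
  obtain ⟨haa, hbb, hcomm, ha1, hb1, hab1⟩ :=
    (isKleinFourPair_map_iff G.subtype_injective).mpr hab
  exact hG _ (G.mul_mem a.2 b.2) hab1
    (GeneralLinearGroup.mul_mem_center_of_mul_self_eq_one h2 haa hbb hcomm
      (hG _ a.2 ha1) (hG _ b.2 hb1))
end

section
/- Let $R = \mathbb{Z}_3[\zeta_3]$ and $U^1_R = 1 + (\zeta_3 - 1)R$ the group of $1$-units. Then the natural map $U^1_R / (U^1_R)^3 \to (R/9R)^\ast$ is injective, and $U^1_R / (U^1_R)^3$ has exactly $27$ elements. -/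
/-!
`R` is finite free over `ℤ₃`, hence `3`-adically complete. So `1 + 3R ⊆ Rˣ`, and a unit
`u = 1 + 9s` has the cube root `1 + 3W`, where `W` is the fixed point of the `3`-adic contraction
`W ↦ s - 3W² - 3W³`. Conversely `x³ ≡ x (mod π)` gives `(1 + πx)³ ≡ 1 (mod 9)`, so `U¹/(U¹)³`
is the image of `U¹` in `(R/9R)ˣ`. Since `9 = ζ₃π⁴` with `π` a non-zero-divisor, `1 + πs` and
`1 + πt` agree mod `9` iff `s ≡ t (mod π³)`, and the `π`-adic digits `a + πb + π²c`,
`a, b, c ∈ {0, 1, 2}`, show that `R/π³R` has `27` elements.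
-/

open Polynomial

/-- The ring `ℤ₃[ζ₃]`, realized as `ℤ₃[X]/(X² + X + 1)`. -/
noncomputable abbrev R3 : Type := AdjoinRoot (X ^ 2 + X + 1 : ℤ_[3][X])

/-- A primitive cube root of unity `ζ₃` in `ℤ₃[ζ₃]`. -/
noncomputable abbrev zeta3 : R3 := AdjoinRoot.root _

/-- The group `U¹ = 1 + (ζ₃ - 1)R` of 1-units of `R = ℤ₃[ζ₃]`. -/
noncomputable def U1 : Subgroup (R3)ˣ where
  carrier := {u | (zeta3 - 1) ∣ ((u : R3) - 1)}
  one_mem' := by simp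
  mul_mem' := by
    rintro a b ⟨x, hx⟩ ⟨y, hy⟩
    exact ⟨(a : R3) * y + x, by push_cast; linear_combination (a : R3) * hy + hx⟩
  inv_mem' := by
    rintro a ⟨x, hx⟩
    refine ⟨-((a⁻¹ : R3ˣ) : R3) * x, ?_⟩
    have h : ((a⁻¹ : R3ˣ) : R3) * ((a : R3ˣ) : R3) = 1 := by
      rw [← Units.val_mul, inv_mul_cancel, Units.val_one]
    linear_combination (-(((a⁻¹ : R3ˣ) : R3))) * hx + h

/-- The subgroup of cubes of 1-units. -/
noncomputable def U1cubes : Subgroup (R3)ˣ :=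
  (U1.map (powMonoidHom 3)) ⊓ U1

/-- The reduction map `R₃ˣ → (R/9R)ˣ`. -/
noncomputable def red9 : (R3)ˣ →* (R3 ⧸ Ideal.span ({9} : Set R3))ˣ :=
  Units.map (Ideal.Quotient.mk (Ideal.span ({9} : Set R3))).toMonoidHom

universe u

theorem IsPrecomplete.of_finite {R : Type u} [CommRing R] [IsNoetherianRing R] (I : Ideal R)
    [IsPrecomplete I R] (M : Type u) [AddCommGroup M] [Module R M] [Module.Finite R M] :
    IsPrecomplete I M := by
  rw [← AdicCompletion.of_surjective_iff]
  intro y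
  -- `M̂ = R̂ ⊗ M` for finite `M` over Noetherian `R`, and `R → R̂` is onto
  obtain ⟨t, rfl⟩ :=
    (AdicCompletion.ofTensorProduct_bijective_of_finite_of_isNoetherian I M).surjective y
  induction t using TensorProduct.induction_on with
  | zero => exact ⟨0, by simp⟩
  | tmul a x =>
    obtain ⟨r, rfl⟩ := AdicCompletion.of_surjective I R a
    exact ⟨r • x, by rw [AdicCompletion.ofTensorProduct_tmul, map_smul]; rfl⟩
  | add s t hs ht =>
    obtain ⟨x, hx⟩ := hs
    obtain ⟨y, hy⟩ := ht
    exact ⟨x + y, by rw [map_add, hx, hy, map_add]⟩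

section FixedPoint

variable {A : Type*} [CommRing A] {I : Ideal A}

theorem Ideal.smodEq_pow_smul_top_iff {n : ℕ} {x y : A} :
    x ≡ y [SMOD (I ^ n • ⊤ : Submodule A A)] ↔ x - y ∈ I ^ n := by
  rw [SModEq.sub_mem, smul_eq_mul, Ideal.mul_top]

theorem IsAdicComplete.exists_fixedPoint [IsAdicComplete I A] (g : A → A)
    (hg : ∀ n x y, x - y ∈ I ^ n → g x - g y ∈ I ^ (n + 1)) : ∃ x, g x = x := by
  obtain ⟨f, hf_succ⟩ : ∃ f : ℕ → A, ∀ n, f (n + 1) = g (f n) :=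
    ⟨fun n ↦ g^[n] 0, fun n ↦ Function.iterate_succ_apply' g n 0⟩
  have hstep (n : ℕ) : f (n + 1) - f n ∈ I ^ n := by
    induction n with
    | zero => simp
    | succ n ih => simpa only [← hf_succ] using hg n _ _ ih
  have hcauchy {m n : ℕ} (hmn : m ≤ n) : f n - f m ∈ I ^ m := by
    induction n, hmn using Nat.le_induction with
    | base => simp
    | succ n hmn ih =>
      rw [← sub_add_sub_cancel]
      exact add_mem (Ideal.pow_le_pow_right hmn (hstep n)) ih
  obtain ⟨L, hL⟩ := IsPrecomplete.prec (I := I) inferInstance (f := f) fun hmn ↦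
    Ideal.smodEq_pow_smul_top_iff.2 (sub_mem_comm_iff.1 (hcauchy hmn))
  refine ⟨L, (IsHausdorff.eq_iff_smodEq (I := I)).2 fun n ↦ Ideal.smodEq_pow_smul_top_iff.2 ?_⟩
  have hgL : g L - f (n + 1) ∈ I ^ (n + 1) :=
    hf_succ n ▸ hg n _ _ (sub_mem_comm_iff.1 (Ideal.smodEq_pow_smul_top_iff.1 (hL n)))
  have hfL : f (n + 1) - L ∈ I ^ (n + 1) := Ideal.smodEq_pow_smul_top_iff.1 (hL (n + 1))
  exact Ideal.pow_le_pow_right n.le_succ (sub_add_sub_cancel (g L) _ L ▸ add_mem hgL hfL)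

end FixedPoint

local notation "π" => (zeta3 - 1 : R3)

theorem monic_X_sq_add_X_add_one : (X ^ 2 + X + 1 : ℤ_[3][X]).Monic := by monicity!

noncomputable def powerBasisR3 : PowerBasis ℤ_[3] R3 :=
  AdjoinRoot.powerBasis' monic_X_sq_add_X_add_one

instance : Module.Finite ℤ_[3] R3 := powerBasisR3.finite

instance : Module.Free ℤ_[3] R3 := .of_basis powerBasisR3.basis

instance isAdicComplete_span_three : IsAdicComplete (Ideal.span {3} : Ideal R3) R3 := by
  have : IsPrecomplete (IsLocalRing.maximalIdeal ℤ_[3]) R3 := .of_finite _ _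
  have hmap : (IsLocalRing.maximalIdeal ℤ_[3]).map (algebraMap ℤ_[3] R3) = Ideal.span {3} := by
    rw [PadicInt.maximalIdeal_eq_span_p, Ideal.map_span, Set.image_singleton, map_natCast,
      Nat.cast_ofNat]
  rw [← hmap, IsAdicComplete.map_algebraMap_iff]
  exact ⟨⟩

theorem zeta3_sq_add_zeta3_add_one : zeta3 ^ 2 + zeta3 + 1 = 0 := by
  have := AdjoinRoot.eval₂_root (X ^ 2 + X + 1 : ℤ_[3][X])
  simpa using this

theorem pi_sq : π ^ 2 = -3 * zeta3 := by linear_combination zeta3_sq_add_zeta3_add_one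

theorem nine_eq : (9 : R3) = zeta3 * π ^ 4 := by
  linear_combination (9 - 10 * zeta3 + 5 * zeta3 ^ 2 - zeta3 ^ 3) * zeta3_sq_add_zeta3_add_one

theorem pi_dvd_three : π ∣ 3 :=
  ⟨-π * zeta3 ^ 2, by linear_combination (3 - 3 * zeta3 + zeta3 ^ 2) * zeta3_sq_add_zeta3_add_one⟩

theorem isUnit_zeta3 : IsUnit zeta3 :=
  .of_mul_eq_one (zeta3 ^ 2) (by linear_combination (zeta3 - 1) * zeta3_sq_add_zeta3_add_one)

theorem isLeftRegular_three : IsLeftRegular (3 : R3) := by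
  intro x y h
  have h3 : (3 : ℤ_[3]) • (x - y) = 0 := by
    rw [Algebra.smul_def, map_ofNat, mul_sub]
    exact sub_eq_zero.2 h
  exact sub_eq_zero.1 ((smul_eq_zero.1 h3).resolve_left (by norm_num))

theorem isLeftRegular_pi : IsLeftRegular π := by
  have h : IsLeftRegular (π * π) := by
    rw [← sq, pi_sq, neg_mul, ← mul_neg]
    exact isLeftRegular_three.mul isUnit_zeta3.neg.isRegular.left
  exact h.of_mul

theorem isUnit_three_mul_add_one (z : R3) : IsUnit (3 * z + 1) :=
  Ideal.mem_jacobson_bot.1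
    (IsAdicComplete.le_jacobson_bot _ (Ideal.mem_span_singleton_self 3)) z

theorem isUnit_pi_mul_add_one (y : R3) : IsUnit (π * y + 1) := by
  have hmul : (π * y + 1) * (1 - π * y) = 3 * (zeta3 * y ^ 2) + 1 := by
    linear_combination (-y ^ 2) * zeta3_sq_add_zeta3_add_one
  exact isUnit_of_mul_isUnit_left (hmul ▸ isUnit_three_mul_add_one _)

theorem eval₂_one_X_sq_add_X_add_one :
    (X ^ 2 + X + 1 : ℤ_[3][X]).eval₂ PadicInt.toZMod (1 : ZMod 3) = 0 := by
  simp only [eval₂_add, eval₂_pow, eval₂_X, eval₂_one, one_pow]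
  decide

noncomputable def residue : R3 →+* ZMod 3 :=
  AdjoinRoot.lift PadicInt.toZMod 1 eval₂_one_X_sq_add_X_add_one

theorem residue_pi : residue π = 0 := by
  rw [map_sub, residue, AdjoinRoot.lift_root, map_one, sub_self]

theorem residue_algebraMap (c : ℤ_[3]) : residue (algebraMap ℤ_[3] R3 c) = PadicInt.toZMod c :=
  AdjoinRoot.lift_of _

theorem exists_pi_dvd_sub_algebraMap (x : R3) : ∃ c : ℤ_[3], π ∣ x - algebraMap ℤ_[3] R3 c := by
  induction x using AdjoinRoot.induction_on with
  | ih p =>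
    refine ⟨p.eval 1, ?_⟩
    rw [← AdjoinRoot.aeval_eq, aeval_def, ← eval_map, ← eval₂_at_one, ← eval_map]
    exact sub_dvd_eval_sub zeta3 1 _

theorem residue_eq_zero_of_pi_dvd {x : R3} (h : π ∣ x) : residue x = 0 := by
  obtain ⟨y, rfl⟩ := h
  rw [map_mul, residue_pi, zero_mul]

theorem pi_dvd_iff_residue_eq_zero {x : R3} : π ∣ x ↔ residue x = 0 := by
  refine ⟨residue_eq_zero_of_pi_dvd, fun hx ↦ ?_⟩
  obtain ⟨c, hc⟩ := exists_pi_dvd_sub_algebraMap x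
  have hc3 : (3 : ℤ_[3]) ∣ c := by
    have := residue_eq_zero_of_pi_dvd hc
    rw [map_sub, hx, zero_sub, neg_eq_zero, residue_algebraMap, ← RingHom.mem_ker,
      PadicInt.ker_toZMod, PadicInt.maximalIdeal_eq_span_p, Ideal.mem_span_singleton] at this
    exact_mod_cast this
  obtain ⟨d, rfl⟩ := hc3
  have := dvd_add hc (dvd_mul_of_dvd_left pi_dvd_three (algebraMap ℤ_[3] R3 d))
  rwa [map_mul, map_ofNat, sub_add_cancel] at this

theorem pi_dvd_pow_three_sub_self (x : R3) : π ∣ x ^ 3 - x := by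
  rw [pi_dvd_iff_residue_eq_zero, map_sub, map_pow, ZMod.pow_card, sub_self]

theorem nine_dvd_pow_three_sub_one {v : R3} (hv : π ∣ v - 1) : 9 ∣ v ^ 3 - 1 := by
  obtain ⟨x, hx⟩ := hv
  obtain ⟨y, hy⟩ := pi_dvd_pow_three_sub_self x
  rw [sub_eq_iff_eq_add'.1 hx]
  exact ⟨zeta3 * x - zeta3 * x ^ 2 - (zeta3 + 1) * y, by
    linear_combination (3 + 6 * zeta3) * hy +
      (6 * y + 3 * x ^ 2 - 4 * x ^ 3 + zeta3 * x ^ 3) * zeta3_sq_add_zeta3_add_one⟩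

theorem exists_pow_three_eq_of_nine_dvd {u : R3} (hu : 9 ∣ u - 1) :
    ∃ v, π ∣ v - 1 ∧ v ^ 3 = u := by
  obtain ⟨s, hs⟩ := hu
  have hcontr (n : ℕ) (x y : R3) (hxy : x - y ∈ Ideal.span {3} ^ n) :
      (s - 3 * x ^ 2 - 3 * x ^ 3) - (s - 3 * y ^ 2 - 3 * y ^ 3) ∈ Ideal.span {3} ^ (n + 1) := by
    rw [show (s - 3 * x ^ 2 - 3 * x ^ 3) - (s - 3 * y ^ 2 - 3 * y ^ 3)
      = 3 * ((y - x) * (x + y + x ^ 2 + x * y + y ^ 2)) by ring, pow_succ' (Ideal.span {3}) n]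
    exact Ideal.mul_mem_mul (Ideal.mem_span_singleton_self 3)
      (Ideal.mul_mem_right _ _ (sub_mem_comm_iff.1 hxy))
  obtain ⟨W, hW⟩ := IsAdicComplete.exists_fixedPoint _ hcontr
  refine ⟨1 + 3 * W, ?_, by linear_combination (-9) * hW - hs⟩
  simpa using dvd_mul_of_dvd_left pi_dvd_three W

theorem mem_U1_iff {u : R3ˣ} : u ∈ U1 ↔ π ∣ (u : R3) - 1 := Iff.rfl

theorem red9_eq_red9_iff {u v : R3ˣ} : red9 u = red9 v ↔ 9 ∣ (u - v : R3) := by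
  rw [red9, Units.ext_iff, Units.coe_map, Units.coe_map]
  exact Ideal.Quotient.mk_eq_mk_iff_sub_mem _ _ |>.trans Ideal.mem_span_singleton

theorem red9_eq_one_iff_exists_pow_three_eq (u : R3ˣ) : red9 u = 1 ↔ ∃ v ∈ U1, v ^ 3 = u := by
  rw [← map_one red9, red9_eq_red9_iff, Units.val_one]
  constructor
  · intro hu
    obtain ⟨v, hv1, hv3⟩ := exists_pow_three_eq_of_nine_dvd hu
    have hv : IsUnit v := (isUnit_pow_iff three_ne_zero).1 (hv3 ▸ u.isUnit)
    exact ⟨hv.unit, mem_U1_iff.2 (by rwa [hv.unit_spec]), Units.ext (by simp [hv3])⟩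
  · rintro ⟨v, hv, rfl⟩
    simpa using nine_dvd_pow_three_sub_one (mem_U1_iff.1 hv)

theorem ker_red9_comp_subtype : (red9.comp U1.subtype).ker = U1cubes.subgroupOf U1 := by
  ext u
  rw [MonoidHom.mem_ker, MonoidHom.comp_apply, Subgroup.coe_subtype,
    red9_eq_one_iff_exists_pow_three_eq, Subgroup.mem_subgroupOf, U1cubes, Subgroup.mem_inf,
    Subgroup.mem_map]
  simp [u.2]

noncomputable def piMulAddOne (t : R3) : R3ˣ := (isUnit_pi_mul_add_one t).unit

theorem val_piMulAddOne (t : R3) : (piMulAddOne t : R3) = π * t + 1 :=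
  (isUnit_pi_mul_add_one t).unit_spec

theorem piMulAddOne_mem_U1 (t : R3) : piMulAddOne t ∈ U1 :=
  mem_U1_iff.2 ⟨t, by rw [val_piMulAddOne, add_sub_cancel_right]⟩

theorem exists_piMulAddOne_eq {u : R3ˣ} (hu : u ∈ U1) : ∃ t, piMulAddOne t = u := by
  obtain ⟨t, ht⟩ := mem_U1_iff.1 hu
  exact ⟨t, Units.ext (by rw [val_piMulAddOne, ← ht, sub_add_cancel])⟩

theorem red9_piMulAddOne_eq_iff {s t : R3} :
    red9 (piMulAddOne s) = red9 (piMulAddOne t) ↔ π ^ 3 ∣ s - t := by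
  rw [red9_eq_red9_iff, val_piMulAddOne, val_piMulAddOne, add_sub_add_right_eq_sub, ← mul_sub,
    nine_eq, isUnit_zeta3.mul_left_dvd, pow_succ' π 3, isLeftRegular_pi.dvd_cancel_left]

theorem exists_eq_natCast_val_add_pi_mul (t : R3) : ∃ t', t = (residue t).val + π * t' := by
  obtain ⟨t', ht'⟩ := pi_dvd_iff_residue_eq_zero.2
    (show residue (t - (residue t).val) = 0 by simp)
  exact ⟨t', sub_eq_iff_eq_add'.1 ht'⟩

theorem eq_of_pi_dvd_natCast_val_sub {a b : ZMod 3} (h : π ∣ (a.val - b.val : R3)) : a = b := by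
  simpa [sub_eq_zero] using pi_dvd_iff_residue_eq_zero.1 h

theorem eq_and_pi_pow_dvd_of_pi_pow_succ_dvd {k : ℕ} {a b : ZMod 3} {x y : R3}
    (h : π ^ (k + 1) ∣ (a.val + π * x) - (b.val + π * y)) : a = b ∧ π ^ k ∣ x - y := by
  have hab : a = b := eq_of_pi_dvd_natCast_val_sub <| by
    have := dvd_sub ((dvd_pow_self π k.succ_ne_zero).trans h) (dvd_mul_right π (x - y))
    rwa [show (a.val + π * x) - (b.val + π * y) - π * (x - y) = (a.val - b.val : R3) by ring]
      at this
  subst hab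
  rw [add_sub_add_left_eq_sub, ← mul_sub, pow_succ' π k, isLeftRegular_pi.dvd_cancel_left] at h
  exact ⟨rfl, h⟩

noncomputable def ofPiDigits (d : ZMod 3 × ZMod 3 × ZMod 3) : R3 :=
  d.1.val + π * (d.2.1.val + π * d.2.2.val)

theorem exists_eq_ofPiDigits_add (t : R3) : ∃ d r, t = ofPiDigits d + π ^ 3 * r := by
  obtain ⟨t₁, h₀⟩ := exists_eq_natCast_val_add_pi_mul t
  obtain ⟨t₂, h₁⟩ := exists_eq_natCast_val_add_pi_mul t₁
  obtain ⟨r, h₂⟩ := exists_eq_natCast_val_add_pi_mul t₂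
  exact ⟨(residue t, residue t₁, residue t₂), r, by
    rw [ofPiDigits]; linear_combination h₀ + π * h₁ + π ^ 2 * h₂⟩

theorem ofPiDigits_eq_of_pi_pow_three_dvd {d e : ZMod 3 × ZMod 3 × ZMod 3}
    (h : π ^ 3 ∣ ofPiDigits d - ofPiDigits e) : d = e := by
  obtain ⟨h₀, h⟩ := eq_and_pi_pow_dvd_of_pi_pow_succ_dvd h
  obtain ⟨h₁, h⟩ := eq_and_pi_pow_dvd_of_pi_pow_succ_dvd h
  exact Prod.ext h₀ (Prod.ext h₁ (eq_of_pi_dvd_natCast_val_sub (by simpa using h)))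

noncomputable def piDigitsEquivRange :
    ZMod 3 × ZMod 3 × ZMod 3 ≃ (red9.comp U1.subtype).range :=
  .ofBijective (fun d ↦ ⟨_, ⟨piMulAddOne (ofPiDigits d), piMulAddOne_mem_U1 _⟩, rfl⟩)
    ⟨fun _ _ hde ↦
      ofPiDigits_eq_of_pi_pow_three_dvd (red9_piMulAddOne_eq_iff.1 (congrArg Subtype.val hde)),
    by
      rintro ⟨_, ⟨u, hu⟩, rfl⟩
      obtain ⟨t, rfl⟩ := exists_piMulAddOne_eq hu
      obtain ⟨d, r, rfl⟩ := exists_eq_ofPiDigits_add t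
      exact ⟨d, Subtype.ext (red9_piMulAddOne_eq_iff.2 ⟨-r, by ring⟩)⟩⟩

/-- The natural map `U¹/(U¹)³ → (R/9R)ˣ` is injective (i.e. a 1-unit maps to `1` mod `9`
iff it is a cube of a 1-unit), and `U¹/(U¹)³` has exactly `27` elements. -/
theorem stmt_10 :
    (∀ u : (R3)ˣ, u ∈ U1 → (red9 u = 1 ↔ ∃ v ∈ U1, v ^ 3 = u)) ∧
    Nat.card (U1 ⧸ (U1cubes.subgroupOf U1)) = 27 := by
  refine ⟨fun u _ ↦ red9_eq_one_iff_exists_pow_three_eq u, ?_⟩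
  rw [← ker_red9_comp_subtype, Nat.card_congr (QuotientGroup.quotientKerEquivRange _).toEquiv,
    ← Nat.card_congr piDigitsEquivRange]
  simp
end

section
/- There exists an abelian group $M$ with $\mathrm{div}(M) \neq \mathrm{Div}(M)$: namely, for an integer $d \geq 2$, let $M$ be the quotient of $\bigoplus_{n \geq 1} \frac{1}{dn}\mathbb{Z}/\mathbb{Z}$ by the kernel of the summation map $\bigoplus_{n \geq 1} \frac{1}{d}\mathbb{Z}/\mathbb{Z} \to \frac{1}{d}\mathbb{Z}/\mathbb{Z}$. Then $\mathrm{div}(M) \cong \frac{1}{d}\mathbb{Z}/\mathbb{Z}$ (in particular non-trivial) while $\mathrm{Div}(M) = 0$. -/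
/-- The cyclic subgroup `(1/m)ℤ/ℤ` of `ℚ/ℤ`. -/
def cyc (m : ℕ) : AddSubgroup (AddCircle (1 : ℚ)) :=
  AddSubgroup.zmultiples ((((m : ℚ)⁻¹ : ℚ) : AddCircle (1 : ℚ)))

/-- The direct sum `⊕_{n ≥ 1} (1/(dn))ℤ/ℤ`. -/
abbrev bigSum (d : ℕ) : Type := Π₀ n : ℕ+, ↥(cyc (d * n))

/-- Summation of all the components, as a map to `ℚ/ℤ`. -/
noncomputable def sumHom (d : ℕ) : bigSum d →+ AddCircle (1 : ℚ) :=
  DFinsupp.sumAddHom (fun n => (cyc (d * n)).subtype)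

/-- The kernel of the summation map `⊕_n (1/d)ℤ/ℤ → (1/d)ℤ/ℤ`, viewed inside
`⊕_n (1/(dn))ℤ/ℤ`: elements all of whose components lie in `(1/d)ℤ/ℤ` and whose
components sum to zero. -/
noncomputable def sumKer (d : ℕ) : AddSubgroup (bigSum d) where
  carrier := {a | (∀ n : ℕ+, ((a n : AddCircle (1 : ℚ)) ∈ cyc d)) ∧ sumHom d a = 0}
  zero_mem' := by
    constructor
    · intro n
      simp [AddSubgroup.zero_mem]
    · simp [map_zero]
  add_mem' := by
    rintro a b ⟨ha1, ha2⟩ ⟨hb1, hb2⟩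
    constructor
    · intro n
      simpa using (cyc d).add_mem (ha1 n) (hb1 n)
    · rw [map_add, ha2, hb2, add_zero]
  neg_mem' := by
    rintro a ⟨ha1, ha2⟩
    constructor
    · intro n
      simpa using (cyc d).neg_mem (ha1 n)
    · rw [map_neg, ha2, neg_zero]

/-- The group `M` of the example: the quotient of `⊕_{n≥1} (1/(dn))ℤ/ℤ` by the kernel of
the summation map on `⊕_{n≥1} (1/d)ℤ/ℤ`. -/
noncomputable abbrev exGroup (d : ℕ) : Type := bigSum d ⧸ sumKer d

/-- The subgroup `nM` of an abelian group. -/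
def smulSub (n : ℕ) (M : Type*) [AddCommGroup M] : AddSubgroup M :=
  (AddMonoidHom.mk' (fun x : M => n • x) (fun a b => smul_add n a b)).range

/-- The subgroup `div(M) = ⋂_{n ≥ 1} nM` of divisible elements. -/
def divSub (M : Type*) [AddCommGroup M] : AddSubgroup M :=
  ⨅ n : ℕ+, smulSub n M

/-- The maximal divisible subgroup `Div(M) = ∑_{φ : ℚ → M} im(φ)`. -/
def DivSub (M : Type*) [AddCommGroup M] : AddSubgroup M :=
  ⨆ φ : ℚ →+ M, φ.range


/-!
If the class of `a ∈ ⊕ₙ (1/(dn))ℤ/ℤ` is divisible by `n` in `M`, then `a n` lies in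
`(1/d)ℤ/ℤ` up to `n • (1/(dn))ℤ/ℤ = (1/d)ℤ/ℤ`. So divisible classes come from elements all of
whose components lie in `(1/d)ℤ/ℤ`, and modulo the kernel such an element is its sum placed in
coordinate `1`. Conversely `x ∈ (1/d)ℤ/ℤ` in coordinate `1` is identified with `x` in coordinate
`n`, which is `n` times an element of `(1/(dn))ℤ/ℤ`. Hence `div(M) ≅ (1/d)ℤ/ℤ`, which is killed
by `d`; the image of any `ℚ → M` is divisible, so lies in `div(M)`, so it is zero.
-/

section DivisibleElements

variable {M : Type*} [AddCommGroup M]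

lemma mem_smulSub {n : ℕ} {x : M} : x ∈ smulSub n M ↔ ∃ y, n • y = x :=
  AddMonoidHom.mem_range

lemma mem_divSub {x : M} : x ∈ divSub M ↔ ∀ n : ℕ+, ∃ y, (n : ℕ) • y = x := by
  simp only [divSub, AddSubgroup.mem_iInf, mem_smulSub]

lemma range_le_divSub (φ : ℚ →+ M) : φ.range ≤ divSub M := by
  rintro _ ⟨q, rfl⟩
  refine mem_divSub.mpr fun n => ⟨φ (q / n), ?_⟩
  rw [← map_nsmul, nsmul_eq_mul, mul_div_cancel₀ _ (by positivity)]

lemma DivSub_eq_bot_of_nsmul_eq_zero {n : ℕ} (hn : n ≠ 0) (h : ∀ x ∈ divSub M, n • x = 0) :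
    DivSub M = ⊥ := by
  refine iSup_eq_bot.mpr fun φ => (AddSubgroup.eq_bot_iff_forall _).mpr ?_
  rintro _ ⟨q, rfl⟩
  calc φ q = n • φ (q / n) := by
        rw [← map_nsmul, nsmul_eq_mul, mul_div_cancel₀ _ (by exact_mod_cast hn)]
    _ = 0 := h _ (range_le_divSub φ ⟨_, rfl⟩)

end DivisibleElements

section Cyc

lemma nsmul_eq_zero_of_mem_cyc {d : ℕ} {x : AddCircle (1 : ℚ)} (hx : x ∈ cyc d) : d • x = 0 := by
  rcases Nat.eq_zero_or_pos d with rfl | hd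
  · exact zero_nsmul x
  obtain ⟨k, rfl⟩ := AddSubgroup.mem_zmultiples_iff.mp hx
  rw [smul_comm, ← AddCircle.coe_nsmul, nsmul_eq_mul, mul_inv_cancel₀ (by positivity),
    AddCircle.coe_period, zsmul_zero]

lemma cyc_ne_bot {d : ℕ} (hd : 2 ≤ d) : cyc d ≠ ⊥ := by
  have : Fact ((0 : ℚ) < 1) := ⟨one_pos⟩
  have h : addOrderOf (((d : ℚ)⁻¹ : ℚ) : AddCircle (1 : ℚ)) = d := by
    rw [← one_div, AddCircle.addOrderOf_period_div (by omega)]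
  rw [cyc, Ne, AddSubgroup.zmultiples_eq_bot, ← AddMonoid.addOrderOf_eq_one_iff, h]
  omega

lemma map_nsmul_cyc_mul (d : ℕ) {n : ℕ} (hn : n ≠ 0) :
    (cyc (d * n)).map (nsmulAddMonoidHom n) = cyc d := by
  rw [cyc, cyc, AddMonoidHom.map_zmultiples, nsmulAddMonoidHom_apply, ← AddCircle.coe_nsmul,
    nsmul_eq_mul, Nat.cast_mul, mul_inv, mul_comm, mul_assoc,
    inv_mul_cancel₀ (by exact_mod_cast hn), mul_one]

end Cyc

section ExGroup

variable (d : ℕ)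

def cycValued : AddSubgroup (bigSum d) :=
  ⨅ n : ℕ+, (cyc d).comap ((cyc (d * n)).subtype.comp (DFinsupp.evalAddMonoidHom n : bigSum d →+ _))

variable {d}

lemma mem_cycValued {a : bigSum d} : a ∈ cycValued d ↔ ∀ n, (a n : AddCircle (1 : ℚ)) ∈ cyc d := by
  simp only [cycValued, AddSubgroup.mem_iInf, AddSubgroup.mem_comap]
  rfl

lemma mem_sumKer {a : bigSum d} : a ∈ sumKer d ↔ a ∈ cycValued d ∧ sumHom d a = 0 := by
  rw [mem_cycValued]
  rfl

lemma sumHom_single (i : ℕ+) (z : cyc (d * i)) : sumHom d (DFinsupp.single i z) = z :=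
  DFinsupp.sumAddHom_single _ _ _

lemma single_mem_cycValued {i : ℕ+} {z : cyc (d * i)} (hz : (z : AddCircle (1 : ℚ)) ∈ cyc d) :
    DFinsupp.single i z ∈ cycValued d := by
  refine mem_cycValued.mpr fun n => ?_
  rcases eq_or_ne i n with rfl | hne
  · simpa using hz
  · simp [DFinsupp.single_eq_of_ne hne.symm]

lemma sumHom_mem_cyc {a : bigSum d} (ha : a ∈ cycValued d) : sumHom d a ∈ cyc d := by
  rw [sumHom, DFinsupp.sumAddHom_apply]
  exact AddSubgroup.sum_mem _ fun n _ => mem_cycValued.mp ha n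

variable (d)

lemma cyc_le_cyc_mul_one : cyc d ≤ cyc (d * (1 : ℕ+)) := by
  simp

noncomputable def ofCyc : cyc d →+ exGroup d :=
  (QuotientAddGroup.mk' (sumKer d)).comp
    ((DFinsupp.singleAddHom (fun n : ℕ+ => cyc (d * n)) 1).comp
      (AddSubgroup.inclusion (cyc_le_cyc_mul_one d)))

lemma ofCyc_apply (x : cyc d) :
    ofCyc d x = ↑(DFinsupp.single 1 (AddSubgroup.inclusion (cyc_le_cyc_mul_one d) x) : bigSum d) :=
  rfl

lemma ofCyc_injective : Function.Injective (ofCyc d) := by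
  refine (injective_iff_map_eq_zero _).mpr fun x hx => Subtype.ext ?_
  rw [ofCyc_apply, QuotientAddGroup.eq_zero_iff] at hx
  exact (sumHom_single 1 _).symm.trans (mem_sumKer.mp hx).2

variable {d}

lemma mk_eq_ofCyc {a : bigSum d} (ha : a ∈ cycValued d) :
    (a : exGroup d) = ofCyc d ⟨sumHom d a, sumHom_mem_cyc ha⟩ := by
  rw [ofCyc_apply]
  refine QuotientAddGroup.eq.mpr (mem_sumKer.mpr
    ⟨add_mem (neg_mem ha) (single_mem_cycValued (sumHom_mem_cyc ha)), ?_⟩)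
  rw [map_add, map_neg, sumHom_single]
  exact neg_add_cancel _

lemma mem_cycValued_of_mem_divSub {a : bigSum d} (h : (a : exGroup d) ∈ divSub (exGroup d)) :
    a ∈ cycValued d := by
  refine mem_cycValued.mpr fun n => ?_
  obtain ⟨c, hc⟩ := mem_divSub.mp h n
  obtain ⟨b, rfl⟩ := QuotientAddGroup.mk_surjective c
  have hker := mem_cycValued.mp (mem_sumKer.mp (QuotientAddGroup.eq.mp hc)).1 n
  have hb : (n : ℕ) • (b n : AddCircle (1 : ℚ)) ∈ cyc d := by
    rw [← map_nsmul_cyc_mul d n.ne_zero]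
    exact ⟨_, (b n).2, rfl⟩
  -- `a n = (-(n • b) + a) n + n • b n`
  simpa using add_mem hker hb

variable (d) in
lemma range_ofCyc : (ofCyc d).range = divSub (exGroup d) := by
  refine le_antisymm ?_ fun c hc => ?_
  · rintro _ ⟨x, rfl⟩
    refine mem_divSub.mpr fun n => ?_
    obtain ⟨y, hy, hyx⟩ := (map_nsmul_cyc_mul d n.ne_zero).ge x.2
    have hny : (((n : ℕ) • (⟨y, hy⟩ : cyc (d * n)) : cyc (d * n)) : AddCircle (1 : ℚ)) = x :=
      hyx
    refine ⟨(DFinsupp.single n ⟨y, hy⟩ : bigSum d), ?_⟩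
    rw [← QuotientAddGroup.mk_nsmul, ← DFinsupp.single_smul,
      mk_eq_ofCyc (single_mem_cycValued (hny ▸ x.2))]
    congr 1
    exact Subtype.ext ((sumHom_single _ _).trans hny)
  · obtain ⟨a, rfl⟩ := QuotientAddGroup.mk_surjective c
    exact ⟨_, (mk_eq_ofCyc (mem_cycValued_of_mem_divSub hc)).symm⟩

lemma nsmul_eq_zero_of_mem_divSub {x : exGroup d} (hx : x ∈ divSub (exGroup d)) : d • x = 0 := by
  obtain ⟨y, rfl⟩ := (range_ofCyc d).ge hx
  rw [← map_nsmul, show d • y = 0 from Subtype.ext (nsmul_eq_zero_of_mem_cyc y.2), map_zero]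

end ExGroup

/-- There is an abelian group `M` with `div(M) ≠ Div(M)`: for `d ≥ 2`, the quotient `M`
of `⊕_{n≥1} (1/(dn))ℤ/ℤ` by the kernel of summation on `⊕_{n≥1} (1/d)ℤ/ℤ` has
`div(M) ≅ (1/d)ℤ/ℤ ≠ 0` while `Div(M) = 0`. -/
theorem stmt_13 (d : ℕ) (hd : 2 ≤ d) :
    Nonempty (↥(divSub (exGroup d)) ≃+ ↥(cyc d)) ∧
    divSub (exGroup d) ≠ ⊥ ∧
    DivSub (exGroup d) = ⊥ := by
  have e : divSub (exGroup d) ≃+ cyc d :=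
    (AddEquiv.addSubgroupCongr (range_ofCyc d).symm).trans
      (AddMonoidHom.ofInjective (ofCyc_injective d)).symm
  refine ⟨⟨e⟩, ?_, DivSub_eq_bot_of_nsmul_eq_zero (by omega) fun _ => nsmul_eq_zero_of_mem_divSub⟩
  have := (AddSubgroup.nontrivial_iff_ne_bot _).mpr (cyc_ne_bot hd)
  exact (AddSubgroup.nontrivial_iff_ne_bot _).mp e.toEquiv.nontrivial
end

section
/- Let $p$ be a prime, $V$ a $2$-dimensional $\mathbb{F}_p$-vector space, and $G \subseteq \mathrm{GL}(V)$ a subgroup with $p \mid \#G$ such that $V$ is an irreducible $G$-module. If moreover $G$ is not contained in any Borel subgroup (stabilizer of a line) of $\mathrm{GL}(V)$, then $G$ contains $\mathrm{SL}(V)$. -/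
/-!
An element `σ ∈ G` of order `p` is unipotent: `(σ - 1) ^ p = σ ^ p - 1 = 0` in characteristic `p`,
so `(σ - 1) ^ 2 = 0` in dimension two and `σ` fixes some `y ≠ 0`. As `G` fixes no line, some
`g ∈ G` moves the line through `y`, and in the basis `(g y, y)` the elements `σ` and `g σ g⁻¹` are a
lower and an upper elementary transvection. Over `𝔽_p` their powers give all elementary
transvections, and these generate `SL₂(𝔽_p)`.
-/

open Module Matrix

theorem IsNilpotent.pow_finrank_eq_zero {R M : Type*} [CommRing R] [IsDomain R] [AddCommGroup M]
    [Module R M] [Module.Free R M] [Module.Finite R M] {N : End R M} (hN : IsNilpotent N) :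
    N ^ finrank R M = 0 := by
  simpa [hN.charpoly_eq_X_pow_finrank] using LinearMap.aeval_self_charpoly N

section

variable {K V : Type*} [Field K] [AddCommGroup V] [Module K V]

theorem Module.End.sq_sub_one_eq_zero_of_pow_eq_one (p : ℕ) [Fact p.Prime] [CharP K p]
    [Module.Finite K V] (hV : finrank K V = 2) {u : (End K V)ˣ} (hu : u ^ p = 1) :
    ((u : End K V) - 1) ^ 2 = 0 := by
  have : Nontrivial V := Module.nontrivial_of_finrank_pos (R := K) (by omega)
  have : CharP (End K V) p := charP_of_injective_algebraMap' K p
  refine hV ▸ IsNilpotent.pow_finrank_eq_zero ⟨p, ?_⟩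
  rw [sub_pow_char_of_commute p (Commute.one_right _), ← Units.val_pow_eq_pow_val, hu,
    Units.val_one, one_pow, sub_self]

theorem Module.End.exists_ne_zero_apply_eq_self {u : End K V} (hu : (u - 1) ^ 2 = 0)
    (hu1 : u ≠ 1) : ∃ y ≠ 0, u y = y := by
  obtain ⟨z, hz⟩ : ∃ z, (u - 1) z ≠ 0 := by
    by_contra! h
    exact hu1 (sub_eq_zero.mp (LinearMap.ext h))
  refine ⟨(u - 1) z, hz, sub_eq_zero.mp ?_⟩
  have := LinearMap.congr_fun hu z
  rwa [sq, Module.End.mul_apply, LinearMap.sub_apply, Module.End.one_apply] at this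

theorem Subgroup.exists_apply_notMem_span_singleton {G : Subgroup (End K V)ˣ}
    (hG : ¬ ∃ L : Submodule K V, finrank K L = 1 ∧ ∀ g ∈ G, L.map (g : End K V) ≤ L)
    {y : V} (hy : y ≠ 0) : ∃ g ∈ G, (g : End K V) y ∉ K ∙ y := by
  by_contra! h
  refine hG ⟨K ∙ y, finrank_span_singleton hy, fun g hg ↦ ?_⟩
  rw [Submodule.map_le_iff_le_comap, Submodule.span_singleton_le_iff_mem]
  exact h g hg

end

theorem Matrix.eq_single_of_sq_eq_zero {R : Type*} [CommRing R] [IsReduced R]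
    {A : Matrix (Fin 2) (Fin 2) R} (hA : A ^ 2 = 0) {i j : Fin 2} (hij : i ≠ j)
    (hi : ∀ k, A k i = 0) : A = single i j (A i j) := by
  have hfin : ∀ k : Fin 2, k = i ∨ k = j := by omega
  have hjj : A j j = 0 := by
    have hsq := congrFun₂ hA j j
    rw [sq, mul_apply, show Finset.univ = {i, j} by ext k; simpa using hfin k,
      Finset.sum_pair hij, hi j, zero_mul, zero_add] at hsq
    exact IsReduced.eq_zero _ ⟨2, by rwa [sq]⟩
  ext k l
  rcases hfin k with rfl | rfl <;> rcases hfin l with rfl | rfl <;>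
    simp [hi, hjj, hij, hij.symm]

namespace Matrix.SpecialLinearGroup

section Transvection

variable {ι : Type*} [Fintype ι] [DecidableEq ι] {i j : ι}

theorem transvection_pow {R : Type*} [CommRing R] (hij : i ≠ j) (c : R) (n : ℕ) :
    transvection hij c ^ n = transvection hij (n * c) := by
  induction n with
  | zero => simp
  | succ n ih => rw [pow_succ, ih, ← transvection_add, Nat.cast_succ, add_one_mul]

theorem transvection_mem_of_ne_zero {p : ℕ} [Fact p.Prime]
    {H : Subgroup (SpecialLinearGroup ι (ZMod p))} (hij : i ≠ j) {c : ZMod p} (hc : c ≠ 0)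
    (hcH : transvection hij c ∈ H) (t : ZMod p) : transvection hij t ∈ H := by
  have ht : t = ((t / c).val : ℕ) * c := by
    rw [ZMod.natCast_val, ZMod.cast_id, div_mul_cancel₀ t hc]
  rw [ht, ← transvection_pow]
  exact H.pow_mem hcH _

end Transvection

theorem eq_top_of_transvection_mem {p : ℕ} [Fact p.Prime]
    {H : Subgroup (SpecialLinearGroup (Fin 2) (ZMod p))} {c d : ZMod p} (hc : c ≠ 0) (hd : d ≠ 0)
    (hcH : transvection zero_ne_one c ∈ H) (hdH : transvection one_ne_zero d ∈ H) : H = ⊤ := by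
  refine eq_top_iff.mpr fun A _ ↦ SL2.transvection_induction (· ∈ H) (fun i j hij t ↦ ?_)
    (fun _ _ ↦ H.mul_mem) A
  fin_cases i <;> fin_cases j
  all_goals first
    | exact absurd rfl hij
    | exact transvection_mem_of_ne_zero _ hc hcH t
    | exact transvection_mem_of_ne_zero _ hd hdH t

section Basis

variable {n R V : Type*} [Fintype n] [DecidableEq n] [CommRing R] [AddCommGroup V] [Module R V]

noncomputable def toGeneralLinearGroup (b : Basis n R V) :
    SpecialLinearGroup n R →* LinearMap.GeneralLinearGroup R V :=
  (GeneralLinearGroup.toLin' b).toMonoidHom.comp toGL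

theorem toGeneralLinearGroup_eq_iff (b : Basis n R V) (A : SpecialLinearGroup n R)
    (u : LinearMap.GeneralLinearGroup R V) :
    toGeneralLinearGroup b A = u ↔ (A : Matrix n n R) = LinearMap.toMatrix b b u := by
  rw [← Units.val_inj]
  change Matrix.toLin b b A = _ ↔ _
  rw [← LinearMap.toMatrix_symm, LinearEquiv.symm_apply_eq]

theorem mem_of_comap_toGeneralLinearGroup_eq_top (b : Basis n R V)
    {G : Subgroup (LinearMap.GeneralLinearGroup R V)} (hG : G.comap (toGeneralLinearGroup b) = ⊤)
    {u : LinearMap.GeneralLinearGroup R V} (hu : LinearMap.det (u : Module.End R V) = 1) :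
    u ∈ G := by
  let A : SpecialLinearGroup n R := ⟨LinearMap.toMatrix b b u, by rwa [LinearMap.det_toMatrix]⟩
  have hA : toGeneralLinearGroup b A = u := (toGeneralLinearGroup_eq_iff b A u).mpr rfl
  exact hA ▸ Subgroup.mem_comap.mp (hG ▸ Subgroup.mem_top A)

end Basis

theorem exists_toGeneralLinearGroup_transvection_eq {K V : Type*} [Field K] [AddCommGroup V]
    [Module K V] (b : Basis (Fin 2) K V) {i j : Fin 2} (hij : i ≠ j) {u : (End K V)ˣ}
    (hu : ((u : End K V) - 1) ^ 2 = 0) (hu1 : u ≠ 1) (hfix : (u : End K V) (b i) = b i) :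
    ∃ c ≠ 0, toGeneralLinearGroup b (transvection hij c) = u := by
  set A := LinearMap.toMatrixAlgEquiv b ((u : End K V) - 1) with hAdef
  have hA : A ^ 2 = 0 := by rw [← map_pow, hu, map_zero]
  have hAi : ∀ k, A k i = 0 := fun k ↦ by
    simp only [A, LinearMap.toMatrixAlgEquiv_apply, LinearMap.sub_apply, Module.End.one_apply,
      hfix, sub_self, map_zero, Finsupp.coe_zero, Pi.zero_apply]
  have hA0 : A ≠ 0 := by
    rw [hAdef, map_ne_zero_iff _ (LinearMap.toMatrixAlgEquiv b).injective, sub_ne_zero]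
    exact fun h ↦ hu1 (Units.val_eq_one.mp h)
  have hAsingle := eq_single_of_sq_eq_zero hA hij hAi
  refine ⟨A i j, fun h ↦ hA0 (by rw [hAsingle, h, single_zero]), ?_⟩
  rw [toGeneralLinearGroup_eq_iff, transvection_coe, ← hAsingle, hAdef, map_sub, map_one,
    add_sub_cancel]
  rfl

end Matrix.SpecialLinearGroup

open Matrix.SpecialLinearGroup in
theorem stmt_14_general (p : ℕ) [Fact p.Prime] (V : Type) [AddCommGroup V]
    [Module (ZMod p) V]
    (hdim : Module.finrank (ZMod p) V = 2)
    (G : Subgroup (Module.End (ZMod p) V)ˣ)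
    (hord : p ∣ Nat.card G)
    (hborel : ¬ ∃ L : Submodule (ZMod p) V, Module.finrank (ZMod p) L = 1 ∧
      ∀ g ∈ G, L.map (g : Module.End (ZMod p) V) ≤ L) :
    ∀ u : (Module.End (ZMod p) V)ˣ,
      LinearMap.det (u : Module.End (ZMod p) V) = 1 → u ∈ G := by
  have : Module.Finite (ZMod p) V := Module.finite_of_finrank_eq_succ hdim
  have : Finite (End (ZMod p) V) := Module.finite_of_finite (ZMod p)
  obtain ⟨σ, hσ⟩ := exists_prime_orderOf_dvd_card' p hord
  obtain ⟨hσp, hσ1⟩ := orderOf_eq_prime_iff.mp ((Subgroup.orderOf_coe σ).trans hσ)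
  have hσu := End.sq_sub_one_eq_zero_of_pow_eq_one p hdim hσp
  obtain ⟨y, hy0, hσy⟩ := End.exists_ne_zero_apply_eq_self hσu (by simpa using hσ1)
  obtain ⟨g, hgG, hgy⟩ := Subgroup.exists_apply_notMem_span_singleton hborel hy0
  set τ := g * σ * g⁻¹ with hτ
  have hτp : τ ^ p = 1 := by rw [conj_pow, hσp, mul_one, mul_inv_cancel]
  have hτ1 : τ ≠ 1 := by simpa [hτ, mul_inv_eq_one] using hσ1
  have hτy : (τ : End (ZMod p) V) ((g : End (ZMod p) V) y) = (g : End (ZMod p) V) y := by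
    rw [← Module.End.mul_apply, ← Units.val_mul, hτ, inv_mul_cancel_right, Units.val_mul,
      Module.End.mul_apply, hσy]
  have hli : LinearIndependent (ZMod p) ![(g : End (ZMod p) V) y, y] :=
    linearIndependent_fin2.mpr ⟨hy0, fun a ha ↦ hgy (Submodule.mem_span_singleton.mpr ⟨a, ha⟩)⟩
  let b := basisOfLinearIndependentOfCardEqFinrank hli (by simp [hdim])
  obtain ⟨c, hc, hσc⟩ := exists_toGeneralLinearGroup_transvection_eq b one_ne_zero hσu hσ1
    (by simpa [b] using hσy)
  obtain ⟨d, hd, hτd⟩ := exists_toGeneralLinearGroup_transvection_eq b zero_ne_one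
    (End.sq_sub_one_eq_zero_of_pow_eq_one p hdim hτp) hτ1 (by simpa [b] using hτy)
  intro u hu
  refine mem_of_comap_toGeneralLinearGroup_eq_top b (eq_top_of_transvection_mem hd hc ?_ ?_) hu
  · rw [Subgroup.mem_comap, hτd]
    exact G.mul_mem (G.mul_mem hgG σ.2) (G.inv_mem hgG)
  · rw [Subgroup.mem_comap, hσc]
    exact σ.2

/-- Dickson: if `V` is a 2-dimensional `𝔽_p`-vector space and `G ⊆ GL(V)` is a subgroup
with `p ∣ #G` acting irreducibly on `V` and not contained in any Borel subgroup
(stabilizer of a line), then `G` contains `SL(V)`. -/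
theorem stmt_14 (p : ℕ) [Fact p.Prime] (V : Type) [AddCommGroup V]
    [Module (ZMod p) V] [FiniteDimensional (ZMod p) V]
    (hdim : Module.finrank (ZMod p) V = 2)
    (G : Subgroup (Module.End (ZMod p) V)ˣ)
    (hord : p ∣ Nat.card G)
    (hirr : ∀ U : Submodule (ZMod p) V,
      (∀ g ∈ G, U.map (g : Module.End (ZMod p) V) ≤ U) → U = ⊥ ∨ U = ⊤)
    (hborel : ¬ ∃ L : Submodule (ZMod p) V, Module.finrank (ZMod p) L = 1 ∧
      ∀ g ∈ G, L.map (g : Module.End (ZMod p) V) ≤ L) :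
    ∀ u : (Module.End (ZMod p) V)ˣ,
      LinearMap.det (u : Module.End (ZMod p) V) = 1 → u ∈ G :=
  stmt_14_general p V hdim G hord hborel
end

section
/- Let $p$ be a prime, let $B \subseteq \mathrm{GL}_2(\mathbb{F}_p)$ be the upper-triangular Borel subgroup, let $U \subseteq B$ be the subgroup of upper unitriangular matrices, and let $\chi_1, \chi_2 : B \to \mathbb{F}_p^\ast$ be the diagonal-entry characters. Let $G \subseteq B$ be a subgroup containing $U$. If the restriction $\chi_1|_G \neq (\chi_2|_G)^2$, then $H^1(G, V) = 0$, where $V = \mathbb{F}_p^2$ with the natural $G$-action. -/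
/-!
Write a 1-cocycle as `f = (x, y)` and let `u s = !![1, s; 0, 1]`. The component `y` is additive
on `U = {u s}`, so `y (u s) = s * c`, and conjugation by `g` rescales `u 1` to `u (χ₁ g / χ₂ g)`;
this forces `c * (χ₂ g - χ₁ g / χ₂ g) = 0`, i.e. `c = 0` for `g` with `χ₁ g ≠ χ₂ g ^ 2`. Then `x`
is additive on `U` as well, so `f|_U` is a coboundary. Once it is subtracted, `f` vanishes on the
normal subgroup `U`, hence takes values in the `U`-invariant line, and `x` becomes a `χ₁`-cocycle
of the abelian group `G / U`, whose exponent divides `p - 1`. Such a cocycle is a coboundary: for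
trivial `χ₁` it is a homomorphism killed by `p - 1`, otherwise `x (g * h) = x (h * g)` solves it.
-/

open Matrix

/-- The natural representation of a subgroup `G ⊆ GL₂(𝔽_p)` on `𝔽_p²`. -/
noncomputable def glRep (p : ℕ) [Fact p.Prime] (G : Subgroup (GL (Fin 2) (ZMod p))) :
    Representation (ZMod p) G (Fin 2 → ZMod p) where
  toFun g := Matrix.toLin' (g : GL (Fin 2) (ZMod p))
  map_one' := by
    simp only [OneMemClass.coe_one, Units.val_one, Matrix.toLin'_one]
    rfl
  map_mul' g h := by
    ext v : 1
    simp [Matrix.toLin'_mul, Module.End.mul_eq_comp]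

open groupCohomology Matrix.GeneralLinearGroup

lemma Matrix.mulVec_fin_two_apply_zero {R : Type*} [CommRing R] (M : Matrix (Fin 2) (Fin 2) R)
    (v : Fin 2 → R) : (M *ᵥ v) 0 = M 0 0 * v 0 + M 0 1 * v 1 := by
  simp

namespace Matrix.GeneralLinearGroup

variable {R : Type*} [CommRing R]

variable (R) in
def borelSubgroup : Subgroup (GL (Fin 2) R) where
  carrier := {g | g 1 0 = 0}
  mul_mem' {g h} hg hh := by simp_all [mul_apply, Fin.sum_univ_two]
  one_mem' := by simp
  inv_mem' {g} hg := by simp_all [coe_units_inv, inv_def, adjugate_fin_two]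

lemma mem_borelSubgroup {g : GL (Fin 2) R} : g ∈ borelSubgroup R ↔ g 1 0 = 0 := Iff.rfl

lemma mul_apply_zero_zero_of_mem_borelSubgroup {g h : GL (Fin 2) R} (hh : h ∈ borelSubgroup R) :
    (g * h) 0 0 = g 0 0 * h 0 0 := by
  simp_all [mem_borelSubgroup, mul_apply, Fin.sum_univ_two]

lemma mul_apply_one_one_of_mem_borelSubgroup {g h : GL (Fin 2) R} (hg : g ∈ borelSubgroup R) :
    (g * h) 1 1 = g 1 1 * h 1 1 := by
  simp_all [mem_borelSubgroup, mul_apply, Fin.sum_univ_two]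

@[simps]
def borelDiag : borelSubgroup R →* R × R where
  toFun g := (g.1 0 0, g.1 1 1)
  map_one' := by simp
  map_mul' g h := by
    simp [mul_apply_zero_zero_of_mem_borelSubgroup h.2, mul_apply_one_one_of_mem_borelSubgroup g.2]

lemma diag_ne_zero_of_mem_borelSubgroup {K : Type*} [Field K] {g : GL (Fin 2) K}
    (hg : g ∈ borelSubgroup K) : g 0 0 ≠ 0 ∧ g 1 1 ≠ 0 := by
  have := g.isUnit.map detMonoidHom
  simp_all [mem_borelSubgroup, det_fin_two]

lemma mul_upperRightHom_eq {g : GL (Fin 2) R} (hg : g ∈ borelSubgroup R) {s t : R}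
    (hst : g 0 0 * s = t * g 1 1) : g * upperRightHom s = upperRightHom t * g := by
  rw [mem_borelSubgroup] at hg
  ext i j
  fin_cases i <;> fin_cases j <;> simp [mul_apply, Fin.sum_univ_two, hg, hst, add_comm]

lemma eq_upperRightHom_of_mem_borelSubgroup {g : GL (Fin 2) R} (hg : g ∈ borelSubgroup R)
    (h₀ : g 0 0 = 1) (h₁ : g 1 1 = 1) : g = upperRightHom (g 0 1) := by
  rw [mem_borelSubgroup] at hg
  ext i j
  fin_cases i <;> fin_cases j <;> simp [hg, h₀, h₁]

lemma mulVec_apply_one_of_mem_borelSubgroup {g : GL (Fin 2) R} (hg : g ∈ borelSubgroup R)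
    (v : Fin 2 → R) : ((g : Matrix (Fin 2) (Fin 2) R) *ᵥ v) 1 = g 1 1 * v 1 := by
  simp [mem_borelSubgroup.mp hg]

end Matrix.GeneralLinearGroup

theorem ZMod.apply_eq_mul_apply_one_of_map_add {n : ℕ} (ψ : ZMod n → ZMod n)
    (hψ : ∀ s t, ψ (s + t) = ψ s + ψ t) (s : ZMod n) : ψ s = s * ψ 1 := by
  simpa using ZMod.map_smul (AddMonoidHom.mk' ψ hψ) s 1

section TwistedCocycle

variable {G K : Type*} [Field K]

theorem cocycle_eq_zero_of_map_pow_eq_zero [Monoid G] {φ : G → K}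
    (hφ : ∀ g h, φ (g * h) = φ h + φ g) {n : ℕ} (hn : (n : K) ≠ 0) {g : G}
    (hg : φ (g ^ n) = 0) : φ g = 0 := by
  have hpow : ∀ k : ℕ, φ (g ^ k) = k * φ g := by
    intro k
    induction k with
    | zero => simpa using hφ 1 1
    | succ k ih => rw [pow_succ, hφ, ih]; push_cast; ring
  simpa [hpow, hn] using hg

theorem exists_eq_mul_sub_one_of_cocycle_comm [Monoid G] (χ : G →* K) {φ : G → K}
    (hφ : ∀ g h, φ (g * h) = χ g * φ h + φ g) (hcomm : ∀ g h, φ (g * h) = φ (h * g))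
    {g₁ : G} (hg₁ : χ g₁ ≠ 1) : ∃ w, ∀ g, φ g = w * (χ g - 1) := by
  refine ⟨φ g₁ / (χ g₁ - 1), fun g => ?_⟩
  rw [div_mul_eq_mul_div, eq_div_iff (sub_ne_zero.mpr hg₁)]
  linear_combination hφ g g₁ - hφ g₁ g - hcomm g g₁

variable {A : Type*} [Group G] [CommMonoid A]

theorem cocycle_mul_comm (π : G →* A) (χ : G →* K) (hχ : ∀ g, π g = 1 → χ g = 1) {φ : G → K}
    (hφ : ∀ g h, φ (g * h) = χ g * φ h + φ g) (hφπ : ∀ g, π g = 1 → φ g = 0) (g h : G) :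
    φ (g * h) = φ (h * g) := by
  set m := g * h * (h * g)⁻¹
  have hm : π m = 1 := by
    rw [map_mul, show π (g * h) = π (h * g) by simp only [map_mul, mul_comm], ← map_mul,
      mul_inv_cancel, map_one]
  calc φ (g * h) = φ (m * (h * g)) := by rw [inv_mul_cancel_right]
    _ = φ (h * g) := by rw [hφ, hχ m hm, hφπ m hm, one_mul, add_zero]

theorem exists_eq_mul_sub_one_of_cocycle (π : G →* A) {n : ℕ} (hn : (n : K) ≠ 0)
    (hπ : ∀ g, π g ^ n = 1) (χ : G →* K) (hχ : ∀ g, π g = 1 → χ g = 1) {φ : G → K}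
    (hφ : ∀ g h, φ (g * h) = χ g * φ h + φ g) (hφπ : ∀ g, π g = 1 → φ g = 0) :
    ∃ w, ∀ g, φ g = w * (χ g - 1) := by
  by_cases hχ₁ : ∀ g, χ g = 1
  · refine ⟨0, fun g => ?_⟩
    rw [zero_mul]
    refine cocycle_eq_zero_of_map_pow_eq_zero (fun g h => ?_) hn (hφπ _ ?_)
    · rw [hφ, hχ₁, one_mul]
    · rw [map_pow, hπ]
  · obtain ⟨g₁, hg₁⟩ := not_forall.mp hχ₁
    exact exists_eq_mul_sub_one_of_cocycle_comm χ hφ (cocycle_mul_comm π χ hχ hφ hφπ) hg₁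

end TwistedCocycle

universe u in
theorem groupCohomology.ρ_apply_eq_self_of_mul_eq_mul {k G : Type u} [CommRing k] [Group G]
    {A : Rep k G} {f : G → A} (hf : f ∈ cocycles₁ A) {n n' g : G} (hn : f n = 0) (hn' : f n' = 0)
    (h : n * g = g * n') : A.ρ n (f g) = f g := by
  have hf := (mem_cocycles₁_iff f).1 hf
  calc A.ρ n (f g) = f (n * g) := by rw [hf, hn, add_zero]
    _ = f g := by rw [h, hf, hn', map_zero, zero_add]

section BorelCocycle

variable {p : ℕ} [Fact p.Prime] {G : Subgroup (GL (Fin 2) (ZMod p))}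

lemma glRep_ρ_apply (g : G) (v : Fin 2 → ZMod p) :
    (Rep.of (glRep p G)).ρ g v = (g.1 : Matrix (Fin 2) (Fin 2) (ZMod p)) *ᵥ v := rfl

lemma mulVec_cocycle {f : G → Fin 2 → ZMod p} (hf : f ∈ cocycles₁ (Rep.of (glRep p G)))
    (g h : G) : f (g * h) = (g.1 : Matrix (Fin 2) (Fin 2) (ZMod p)) *ᵥ f h + f g := by
  have := (mem_cocycles₁_iff (A := Rep.of (glRep p G)) f).1 hf g h
  rw [glRep_ρ_apply] at this
  exact this

lemma cocycle_apply_zero {f : G → Fin 2 → ZMod p} (hf : f ∈ cocycles₁ (Rep.of (glRep p G)))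
    (g h : G) : f (g * h) 0 = g.1 0 0 * f h 0 + g.1 0 1 * f h 1 + f g 0 := by
  rw [mulVec_cocycle hf, Pi.add_apply, mulVec_fin_two_apply_zero]

lemma cocycle_apply_one (hGB : G ≤ borelSubgroup (ZMod p)) {f : G → Fin 2 → ZMod p}
    (hf : f ∈ cocycles₁ (Rep.of (glRep p G))) (g h : G) :
    f (g * h) 1 = g.1 1 1 * f h 1 + f g 1 := by
  rw [mulVec_cocycle hf, Pi.add_apply, mulVec_apply_one_of_mem_borelSubgroup (hGB g.2)]

variable {u : ZMod p → G}

lemma unipotent_add (hu : ∀ s, (u s : GL (Fin 2) (ZMod p)) = upperRightHom s) (s t : ZMod p) :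
    u (s + t) = u s * u t :=
  Subtype.ext (by simp [hu, AddChar.map_add_eq_mul])

lemma mul_unipotent_eq (hGB : G ≤ borelSubgroup (ZMod p))
    (hu : ∀ s, (u s : GL (Fin 2) (ZMod p)) = upperRightHom s) {g : G} {s t : ZMod p}
    (hst : g.1 0 0 * s = t * g.1 1 1) : g * u s = u t * g :=
  Subtype.ext (by simpa [hu] using mul_upperRightHom_eq (hGB g.2) hst)

lemma cocycle_unipotent_apply_one_eq_zero (hGB : G ≤ borelSubgroup (ZMod p))
    (hu : ∀ s, (u s : GL (Fin 2) (ZMod p)) = upperRightHom s)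
    {f : G → Fin 2 → ZMod p} (hf : f ∈ cocycles₁ (Rep.of (glRep p G))) {g₀ : G}
    (hg₀ : g₀.1 0 0 ≠ g₀.1 1 1 ^ 2) (s : ZMod p) : f (u s) 1 = 0 := by
  have hlin : ∀ s, f (u s) 1 = s * f (u 1) 1 := by
    refine ZMod.apply_eq_mul_apply_one_of_map_add (fun s => f (u s) 1) fun s t => ?_
    simp [unipotent_add hu, cocycle_apply_one hGB hf, hu, add_comm]
  rw [hlin]
  refine mul_eq_zero_of_right _ ((mul_eq_zero.mp ?_).resolve_left (sub_ne_zero.mpr hg₀.symm))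
  obtain ⟨ha, hd⟩ := diag_ne_zero_of_mem_borelSubgroup (hGB g₀.2)
  have hconj : g₀ * u 1 = u (g₀.1 0 0 / g₀.1 1 1) * g₀ :=
    mul_unipotent_eq hGB hu (by field_simp)
  have key := congrArg (fun g => f g 1) hconj
  simp only [cocycle_apply_one hGB hf, hu, hlin (g₀.1 0 0 / g₀.1 1 1), upperRightHom_apply,
    of_apply, cons_val', cons_val_one, empty_val', cons_val_fin_one, one_mul] at key
  linear_combination g₀.1 1 1 * key + f (u 1) 1 * div_mul_cancel₀ (g₀.1 0 0) hd

lemma exists_cocycle_unipotent_eq_coboundary (hGB : G ≤ borelSubgroup (ZMod p))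
    (hu : ∀ s, (u s : GL (Fin 2) (ZMod p)) = upperRightHom s)
    {f : G → Fin 2 → ZMod p} (hf : f ∈ cocycles₁ (Rep.of (glRep p G))) {g₀ : G}
    (hg₀ : g₀.1 0 0 ≠ g₀.1 1 1 ^ 2) :
    ∃ v, ∀ s, f (u s) = ((u s).1 : Matrix (Fin 2) (Fin 2) (ZMod p)) *ᵥ v - v := by
  have hsnd := cocycle_unipotent_apply_one_eq_zero hGB hu hf hg₀
  have hlin : ∀ s, f (u s) 0 = s * f (u 1) 0 := by
    refine ZMod.apply_eq_mul_apply_one_of_map_add (fun s => f (u s) 0) fun s t => ?_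
    simp [unipotent_add hu, cocycle_apply_zero hf, hu, hsnd, add_comm]
  refine ⟨![0, f (u 1) 0], fun s => ?_⟩
  ext i
  fin_cases i
  · simp [hlin s, hu, mul_comm]
  · simp [hsnd s, hu]

lemma cocycle_apply_one_eq_zero_of_unipotent_eq_zero (hGB : G ≤ borelSubgroup (ZMod p))
    (hu : ∀ s, (u s : GL (Fin 2) (ZMod p)) = upperRightHom s)
    {f : G → Fin 2 → ZMod p} (hf : f ∈ cocycles₁ (Rep.of (glRep p G)))
    (hfU : ∀ s, f (u s) = 0) (g : G) : f g 1 = 0 := by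
  obtain ⟨ha, hd⟩ := diag_ne_zero_of_mem_borelSubgroup (hGB g.2)
  have hconj : g * u (g.1 1 1 / g.1 0 0) = u 1 * g := mul_unipotent_eq hGB hu (by field_simp)
  have hfix := congrFun (ρ_apply_eq_self_of_mul_eq_mul hf (hfU 1) (hfU _) hconj.symm) 0
  rw [glRep_ρ_apply, mulVec_fin_two_apply_zero] at hfix
  simpa [hu] using hfix

lemma mem_coboundaries₁_of_unipotent_eq_zero (hGB : G ≤ borelSubgroup (ZMod p))
    (hu : ∀ s, (u s : GL (Fin 2) (ZMod p)) = upperRightHom s)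
    {f : G → Fin 2 → ZMod p} (hf : f ∈ cocycles₁ (Rep.of (glRep p G)))
    (hfU : ∀ s, f (u s) = 0) : f ∈ coboundaries₁ (Rep.of (glRep p G)) := by
  have hsnd := cocycle_apply_one_eq_zero_of_unipotent_eq_zero hGB hu hf hfU
  let π : G →* ZMod p × ZMod p := borelDiag.comp (Subgroup.inclusion hGB)
  have hn : ((p - 1 : ℕ) : ZMod p) ≠ 0 := by
    rw [Nat.cast_sub (Fact.out : p.Prime).one_le, ZMod.natCast_self]
    simp
  have hπ : ∀ g, π g ^ (p - 1) = 1 := fun g => by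
    obtain ⟨ha, hd⟩ := diag_ne_zero_of_mem_borelSubgroup (hGB g.2)
    exact Prod.ext (ZMod.pow_card_sub_one_eq_one ha) (ZMod.pow_card_sub_one_eq_one hd)
  have hker : ∀ g, π g = 1 → f g 0 = 0 := fun g hg => by
    obtain ⟨ha, hd⟩ := Prod.ext_iff.mp hg
    have hg_eq : g = u (g.1 0 1) :=
      Subtype.ext ((eq_upperRightHom_of_mem_borelSubgroup (hGB g.2) ha hd).trans (hu _).symm)
    rw [hg_eq, hfU, Pi.zero_apply]
  obtain ⟨w, hw⟩ := exists_eq_mul_sub_one_of_cocycle π hn hπ ((MonoidHom.fst _ _).comp π)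
    (fun g hg => congrArg Prod.fst hg) (φ := fun g => f g 0)
    (fun g h => by simp [cocycle_apply_zero hf, hsnd, π]) hker
  have hw' : ∀ g : G, f g 0 = w * (g.1 0 0 - 1) := hw
  refine ⟨![w, 0], funext fun g => ?_⟩
  show (g.1 : Matrix (Fin 2) (Fin 2) (ZMod p)) *ᵥ ![w, 0] - ![w, 0] = f g
  refine funext (Fin.forall_fin_two.mpr ⟨?_, ?_⟩)
  · rw [Pi.sub_apply, mulVec_fin_two_apply_zero, hw' g]
    simp only [cons_val_zero, cons_val_one, cons_val_fin_one]
    ring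
  · rw [Pi.sub_apply, mulVec_apply_one_of_mem_borelSubgroup (hGB g.2), hsnd g]
    simp

end BorelCocycle

/-- Let `G` be a subgroup of the upper triangular Borel `B ⊆ GL₂(𝔽_p)` containing the
unipotent subgroup `U`, with diagonal characters `χ₁, χ₂` (the diagonal entries).  If
`χ₁|_G ≠ (χ₂|_G)²`, then `H¹(G, 𝔽_p²) = 0` for the natural action. -/
theorem stmt_16 (p : ℕ) [Fact p.Prime]
    (G : Subgroup (GL (Fin 2) (ZMod p)))
    (hB : ∀ g ∈ G, (g : Matrix (Fin 2) (Fin 2) (ZMod p)) 1 0 = 0)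
    (hU : ∀ b : ZMod p, ∃ u ∈ G, (u : Matrix (Fin 2) (Fin 2) (ZMod p)) = !![1, b; 0, 1])
    (hchi : ∃ g ∈ G, (g : Matrix (Fin 2) (Fin 2) (ZMod p)) 0 0 ≠
      ((g : Matrix (Fin 2) (Fin 2) (ZMod p)) 1 1) ^ 2) :
    Subsingleton (groupCohomology.H1 (Rep.of (glRep p G))) := by
  have hGB : G ≤ borelSubgroup (ZMod p) := hB
  have hUG : ∀ s, upperRightHom s ∈ G := fun s => by
    obtain ⟨u, hu, hmat⟩ := hU s
    exact (Units.ext hmat : u = upperRightHom s) ▸ hu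
  let u : ZMod p → G := fun s => ⟨upperRightHom s, hUG s⟩
  have hu : ∀ s, (u s : GL (Fin 2) (ZMod p)) = upperRightHom s := fun _ => rfl
  obtain ⟨g₀, hg₀G, hg₀⟩ := hchi
  refine subsingleton_of_forall_eq 0 fun x => H1_induction_on x fun f => ?_
  rw [H1π_eq_zero_iff]
  obtain ⟨v, hv⟩ := exists_cocycle_unipotent_eq_coboundary hGB hu f.2 (g₀ := ⟨g₀, hg₀G⟩) hg₀
  have hδ : (d₀₁ (Rep.of (glRep p G))).hom v ∈ coboundaries₁ _ := ⟨v, rfl⟩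
  rw [← Submodule.sub_mem_iff_left _ hδ]
  refine mem_coboundaries₁_of_unipotent_eq_zero hGB hu
    (sub_mem f.2 (coboundaries₁_le_cocycles₁ _ hδ)) fun s => ?_
  exact sub_eq_zero.mpr (hv s)
end
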